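/- For every k ≥ 0, s ∈ [[0, 2^k − 1]], and i ∈ [[0, last_{k,s}]], writing r = rev_k(t_{k,s,i}) and l = l_{k,s,i}: if c' ∈ {−1,1}^{d'} and c'' ∈ {−1,1}^{d''} with 0 ≤ d' < d'' ≤ l, and x' = dsc_k(r, c') and x'' = dsc_k(r, c'') both belong to X_{k,s,i}, then rev_k(x') < rev_k(x''). -/

import Mathlib

/-- `revBit k x` is the `k`-bit reversal of `x`:
if `x = (x_{k-1}, …, x_0)₂` then `revBit k x = (x_0, …, x_{k-1})₂`. -/
def revBit (k x : ℕ) : ℕ := ∑ i ∈ Finset.range k, (x / 2 ^ i % 2) * 2 ^ (k - 1 - i)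

/-- `lmax k x = max { l ≤ k | x mod 2^l = 0 }`. -/
def lmax (k x : ℕ) : ℕ := Nat.findGreatest (fun l => x % 2 ^ l = 0) k

/-- The sequence of time slots `t_{k,s,i}`. -/
def tSlot (k s : ℕ) : ℕ → ℕ
  | 0 => s
  | i + 1 => (tSlot k s i + 2 ^ lmax k (tSlot k s i)) % 2 ^ k

/-- `lVal k s i = l_{k,s,i} = max { l ≤ k | t_{k,s,i} mod 2^l = 0 }`. -/
def lVal (k s i : ℕ) : ℕ := lmax k (tSlot k s i)

/-- `lastIdx k s = min { i ≥ 0 | t_{k,s,i} = 0 }`. -/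
noncomputable def lastIdx (k s : ℕ) : ℕ := sInf {i | tSlot k s i = 0}

/-- The segment of time slots `Y_{k,s,i}`: for `i < last` it is
`[[t_{k,s,i}, t_{k,s,i+1} - 1]]` and for `i = last` it is `[[0, 2^k - 1]]`. -/
noncomputable def Yseg (k s i : ℕ) : Set ℕ :=
  if i < lastIdx k s then Set.Icc (tSlot k s i) (tSlot k s (i + 1) - 1)
  else Set.Icc 0 (2 ^ k - 1)

/-- `Ysub k s i l = Y_{k,s,i,l} = [[t_{k,s,i} + ⌊2^{l-1}⌋, t_{k,s,i} + 2^l - 1]]`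
(note `⌊2^{l-1}⌋ = 2^l / 2` for natural `l`). -/
def Ysub (k s i l : ℕ) : Set ℕ :=
  Set.Icc (tSlot k s i + 2 ^ l / 2) (tSlot k s i + 2 ^ l - 1)

/-- `X_{k,s,i,l} = rev_k Y_{k,s,i,l}`, viewed as a set of integers. -/
def XsubZ (k s i l : ℕ) : Set ℤ := (fun y => ((revBit k y : ℕ) : ℤ)) '' Ysub k s i l

/-- `X_{k,s,i} = rev_k Y_{k,s,i}`, viewed as a set of integers. -/
noncomputable def XsegZ (k s i : ℕ) : Set ℤ := (fun y => ((revBit k y : ℕ) : ℤ)) '' Yseg k s i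
/-- The descendant `dsc_k(x, c) = x + ∑_{i=1}^{d} 2^{k-i} · c_i` of `x` by the
path `c = (c_1, …, c_d)`, computed via
`dsc_k(x, (c_1, c_2, …, c_d)) = dsc_{k-1}(x + 2^{k-1}·c_1, (c_2, …, c_d))`. -/
def dsc : ℕ → ℤ → List ℤ → ℤ
  | _, x, [] => x
  | k, x, c :: cs => dsc (k - 1) (x + 2 ^ (k - 1) * c) cs

/-- A path is a sequence over `{-1, 1}`. -/
def IsPath (c : List ℤ) : Prop := ∀ y ∈ c, y = -1 ∨ y = 1

/-- The level at depth `d` rooted at `x`: `L_{k,d}(x) = { dsc_k(x,c) | c ∈ {-1,1}^d }`. -/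
def levelSet (k d : ℕ) (x : ℤ) : Set ℤ :=
  {z : ℤ | ∃ c : List ℤ, c.length = d ∧ IsPath c ∧ z = dsc k x c}

/-- The sub-tree of depth `d` rooted at `x`:
`ST_{k,d}(x) = { dsc_k(x,c) | d' ∈ [[0,d]], c ∈ {-1,1}^{d'} }`. -/
def subTree (k d : ℕ) (x : ℤ) : Set ℤ :=
  {z : ℤ | ∃ c : List ℤ, c.length ≤ d ∧ IsPath c ∧ z = dsc k x c}



lemma sum_two_pow (n : ℕ) : ∑ j ∈ Finset.range n, 2 ^ j = 2 ^ n - 1 := by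
  induction n with
  | zero => simp
  | succ n ih => rw [Finset.sum_range_succ, ih, pow_succ]; have := Nat.one_le_two_pow (n := n); omega

lemma sum_two_pow_rev (n : ℕ) : ∑ j ∈ Finset.range n, 2 ^ (n - 1 - j) = 2 ^ n - 1 := by
  rw [Finset.sum_range_reflect (fun j => 2 ^ j) n, sum_two_pow]

lemma bit_zero_of_mod (l t i : ℕ) (ht : t % 2 ^ l = 0) (hi : i < l) : t / 2 ^ i % 2 = 0 := by
  obtain ⟨q, hq⟩ := Nat.dvd_of_mod_eq_zero ht
  subst hq
  have h1 : 2 ^ l * q = 2 ^ (l - i) * q * 2 ^ i := by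
    rw [mul_right_comm, ← pow_add]; congr 2; omega
  rw [h1, Nat.mul_div_cancel _ (Nat.two_pow_pos i)]
  obtain ⟨j, hj⟩ : ∃ j, l - i = j + 1 := ⟨l - i - 1, by omega⟩
  rw [hj, pow_succ']
  rw [mul_assoc]
  exact Nat.mul_mod_right 2 _

/-- key bound: if low `l` bits of `t` vanish then `revBit k t < 2^(k-l)`. -/
lemma revBit_lt_of_mod (k l t : ℕ) (hl : l ≤ k) (ht : t % 2 ^ l = 0) :
    revBit k t < 2 ^ (k - l) := by
  have hsplit : revBit k t = ∑ i ∈ Finset.Ico l k, t / 2 ^ i % 2 * 2 ^ (k - 1 - i) := by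
    rw [revBit, Finset.range_eq_Ico, ← Finset.sum_Ico_consecutive _ (Nat.zero_le l) hl]
    rw [← Finset.range_eq_Ico]
    have : ∑ i ∈ Finset.range l, t / 2 ^ i % 2 * 2 ^ (k - 1 - i) = 0 := by
      apply Finset.sum_eq_zero
      intro i hi
      rw [bit_zero_of_mod l t i ht (Finset.mem_range.mp hi), zero_mul]
    rw [this, zero_add]
  have hle : revBit k t ≤ ∑ i ∈ Finset.Ico l k, 2 ^ (k - 1 - i) := by
    rw [hsplit]
    apply Finset.sum_le_sum
    intro i _
    have : t / 2 ^ i % 2 ≤ 1 := by omega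
    nlinarith [Nat.two_pow_pos (k - 1 - i)]
  have heq : ∑ i ∈ Finset.Ico l k, 2 ^ (k - 1 - i) = 2 ^ (k - l) - 1 := by
    rw [Finset.sum_Ico_eq_sum_range]
    have : ∀ j ∈ Finset.range (k - l), 2 ^ (k - 1 - (l + j)) = 2 ^ (k - l - 1 - j) := by
      intro j hj; congr 1; omega
    rw [Finset.sum_congr rfl this, sum_two_pow_rev]
  have : 0 < 2 ^ (k - l) := Nat.two_pow_pos _
  omega

lemma revBit_lt (k x : ℕ) : revBit k x < 2 ^ k := by
  simpa using revBit_lt_of_mod k 0 x (Nat.zero_le k) (Nat.mod_one x)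

/-- splitting lemma, `e + d` form -/
lemma revBit_split' (e d a m : ℕ) (ha : a < 2 ^ e) (hm : m < 2 ^ d) :
    revBit (e + d) (a + 2 ^ e * m) = revBit (e + d) a + revBit d m := by
  have hlow : ∀ i, i < e → (a + 2 ^ e * m) / 2 ^ i % 2 = a / 2 ^ i % 2 := by
    intro i hi
    have h1 : 2 ^ e * m = 2 ^ (e - i) * m * 2 ^ i := by
      rw [mul_right_comm, ← pow_add]; congr 2; omega
    rw [h1, Nat.add_mul_div_right _ _ (Nat.two_pow_pos i)]
    obtain ⟨j, hj⟩ : ∃ j, e - i = j + 1 := ⟨e - i - 1, by omega⟩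
    rw [hj, pow_succ', mul_assoc, Nat.add_mul_mod_self_left]
  have hhigh : ∀ j, (a + 2 ^ e * m) / 2 ^ (e + j) % 2 = m / 2 ^ j % 2 := by
    intro j
    rw [pow_add, ← Nat.div_div_eq_div_mul,
      Nat.add_mul_div_left _ _ (Nat.two_pow_pos _),
      Nat.div_eq_of_lt ha, zero_add]
  rw [revBit, revBit, revBit]
  rw [Finset.sum_range_add, Finset.sum_range_add]
  have h1 : ∀ i ∈ Finset.range e,
      (a + 2 ^ e * m) / 2 ^ i % 2 * 2 ^ (e + d - 1 - i)
      = a / 2 ^ i % 2 * 2 ^ (e + d - 1 - i) := by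
    intro i hi; rw [hlow i (Finset.mem_range.mp hi)]
  have h2 : ∀ j ∈ Finset.range d,
      (a + 2 ^ e * m) / 2 ^ (e + j) % 2 * 2 ^ (e + d - 1 - (e + j))
      = m / 2 ^ j % 2 * 2 ^ (d - 1 - j) := by
    intro j hj
    rw [hhigh j]
    congr 2
    have := Finset.mem_range.mp hj
    omega
  have h3 : ∀ j ∈ Finset.range d,
      a / 2 ^ (e + j) % 2 * 2 ^ (e + d - 1 - (e + j)) = 0 := by
    intro j hj
    have hz : a / 2 ^ (e + j) = 0 := by
      apply Nat.div_eq_of_lt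
      calc a < 2 ^ e := ha
        _ ≤ 2 ^ (e + j) := Nat.pow_le_pow_right (by norm_num) (by omega)
    rw [hz]; simp
  rw [Finset.sum_congr rfl h1, Finset.sum_congr rfl h2,
    Finset.sum_congr rfl h3]
  simp [add_assoc]

lemma revBit_split (k d a m : ℕ) (hd : d ≤ k) (ha : a < 2 ^ (k - d)) (hm : m < 2 ^ d) :
    revBit k (a + 2 ^ (k - d) * m) = revBit k a + revBit d m := by
  have h := revBit_split' (k - d) d a m ha hm
  rwa [show k - d + d = k from by omega] at h

lemma revBit_ge_of_odd (d m : ℕ) (hd : 1 ≤ d) (hm : m % 2 = 1) :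
    2 ^ (d - 1) ≤ revBit d m := by
  rw [revBit]
  calc 2 ^ (d - 1) = m / 2 ^ 0 % 2 * 2 ^ (d - 1 - 0) := by simp [hm]
    _ ≤ _ := Finset.single_le_sum (f := fun i => m / 2 ^ i % 2 * 2 ^ (d - 1 - i))
        (fun i _ => Nat.zero_le _) (Finset.mem_range.mpr hd)

def pval : List ℤ → ℤ
  | [] => 0
  | a :: cs => a * 2 ^ cs.length + pval cs

lemma dsc_eq (c : List ℤ) : ∀ (k : ℕ) (x : ℤ), c.length ≤ k →
    dsc k x c = x + 2 ^ (k - c.length) * pval c := by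
  induction c with
  | nil => intro k x _; simp [dsc, pval]
  | cons a cs ih =>
    intro k x hk
    simp only [List.length_cons] at hk
    rw [dsc, pval, ih (k - 1) _ (by omega)]
    have h1 : (2 : ℤ) ^ (k - 1) = 2 ^ (k - (cs.length + 1)) * 2 ^ cs.length := by
      rw [← pow_add]; congr 1; omega
    have h2 : k - 1 - cs.length = k - (cs.length + 1) := by omega
    rw [h1, h2, List.length_cons]
    ring

lemma pval_odd (c : List ℤ) (hc : IsPath c) (hne : c ≠ []) : ¬ (2 ∣ pval c) := by
  induction c with
  | nil => exact absurd rfl hne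
  | cons a cs ih =>
    rcases List.eq_nil_or_concat cs with h | _
    · subst h
      rcases hc a (by simp) with h | h <;> simp [pval, h] <;> omega
    · have hcs : cs ≠ [] := by rintro rfl; simp_all
      have h2 : ¬ (2 ∣ pval cs) := ih (fun y hy => hc y (List.mem_cons_of_mem a hy)) hcs
      rw [pval]
      intro hdvd
      apply h2
      have := List.length_pos_iff.mpr hcs
      have hpow : (2 : ℤ) ∣ a * 2 ^ cs.length := by
        apply Dvd.dvd.mul_left
        exact dvd_pow_self 2 (by omega)
      omega

/-- Lemma (X-BST, part d): writing `r = rev_k(t_{k,s,i})` and `l = l_{k,s,i}`: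
if `c' ∈ {-1,1}^{d'}` and `c'' ∈ {-1,1}^{d''}` with `0 ≤ d' < d'' ≤ l`, and
`x' = dsc_k(r, c')` and `x'' = dsc_k(r, c'')` both belong to `X_{k,s,i}`, then
`rev_k(x') < rev_k(x'')`. -/
theorem stmt_16 (k s i : ℕ) (hs : s < 2 ^ k) (hi : i ≤ lastIdx k s)
    (c' c'' : List ℤ) (hc' : IsPath c') (hc'' : IsPath c'')
    (hlen : c'.length < c''.length) (hlenl : c''.length ≤ lVal k s i)
    (hx' : dsc k ((revBit k (tSlot k s i) : ℕ) : ℤ) c' ∈ XsegZ k s i)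
    (hx'' : dsc k ((revBit k (tSlot k s i) : ℕ) : ℤ) c'' ∈ XsegZ k s i) :
    revBit k (dsc k ((revBit k (tSlot k s i) : ℕ) : ℤ) c').toNat <
      revBit k (dsc k ((revBit k (tSlot k s i) : ℕ) : ℤ) c'').toNat := by
  classical
  set t := tSlot k s i with hts
  set l := lVal k s i with hlv
  set r := revBit k t with hrdef
  have hlk : l ≤ k := Nat.findGreatest_le k
  have hmod : t % 2 ^ l = 0 :=
    Nat.findGreatest_spec (P := fun l => t % 2 ^ l = 0) (Nat.zero_le k) (Nat.mod_one t)
  have hrlt : r < 2 ^ (k - l) := revBit_lt_of_mod k l t hlk hmod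
  have key : ∀ (c : List ℤ), IsPath c → c.length ≤ l →
      dsc k ((r : ℕ) : ℤ) c ∈ XsegZ k s i →
      ∃ m : ℕ, m < 2 ^ c.length ∧ (pval c = (m : ℤ)) ∧
        revBit k (dsc k ((r : ℕ) : ℤ) c).toNat = revBit k r + revBit c.length m := by
    intro c hc hcl hmem
    obtain ⟨y, _, hy⟩ := hmem
    set x := dsc k ((r : ℕ) : ℤ) c with hx
    have hxnn : (0 : ℤ) ≤ x := by rw [← hy]; positivity
    have hxlt : x < 2 ^ k := by
      rw [← hy]
      show ((revBit k y : ℕ) : ℤ) < 2 ^ k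
      exact_mod_cast revBit_lt k y
    have hde : x = (r : ℤ) + 2 ^ (k - c.length) * pval c := dsc_eq c k _ (by omega)
    have hrlt' : (r : ℤ) < 2 ^ (k - c.length) := by
      have h2 : (2 : ℤ) ^ (k - l) ≤ 2 ^ (k - c.length) := by
        apply pow_le_pow_right₀ (by norm_num); omega
      calc (r : ℤ) < 2 ^ (k - l) := by exact_mod_cast hrlt
        _ ≤ _ := h2
    have hPpos : (0 : ℤ) < 2 ^ (k - c.length) := by positivity
    have hPQ : (2 : ℤ) ^ (k - c.length) * 2 ^ c.length = 2 ^ k := by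
      rw [← pow_add]; congr 1; omega
    have hrnn : (0 : ℤ) ≤ (r : ℤ) := Int.natCast_nonneg r
    have hMnn : 0 ≤ pval c := by
      by_contra hneg
      push_neg at hneg
      have h1 : pval c ≤ -1 := by omega
      have h2 : 2 ^ (k - c.length) * pval c ≤ 2 ^ (k - c.length) * (-1) :=
        mul_le_mul_of_nonneg_left h1 (le_of_lt hPpos)
      linarith
    have hMlt : pval c < 2 ^ c.length := by
      by_contra hge
      push_neg at hge
      have h2 : 2 ^ (k - c.length) * (2 : ℤ) ^ c.length ≤ 2 ^ (k - c.length) * pval c :=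
        mul_le_mul_of_nonneg_left hge (le_of_lt hPpos)
      rw [hPQ] at h2
      linarith
    have hmn : ((pval c).toNat : ℤ) = pval c := Int.toNat_of_nonneg hMnn
    have hmlt : (pval c).toNat < 2 ^ c.length := by
      have h := hMlt; rw [← hmn] at h; exact_mod_cast h
    have hrlt'' : r < 2 ^ (k - c.length) :=
      lt_of_lt_of_le hrlt (Nat.pow_le_pow_right (by norm_num) (by omega))
    refine ⟨(pval c).toNat, hmlt, hmn.symm, ?_⟩
    have hxval : x.toNat = r + 2 ^ (k - c.length) * (pval c).toNat := by
      have hxe : x = ((r + 2 ^ (k - c.length) * (pval c).toNat : ℕ) : ℤ) := by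
        push_cast [hmn]; exact hde
      rw [hxe, Int.toNat_natCast]
    rw [hxval, revBit_split k c.length r (pval c).toNat (by omega) hrlt'' hmlt]
  obtain ⟨m', hm'lt, hm'eq, hrev'⟩ := key c' hc' (by omega) hx'
  obtain ⟨m'', hm''lt, hm''eq, hrev''⟩ := key c'' hc'' hlenl hx''
  rw [hrev', hrev'']
  have hne : c'' ≠ [] := by
    intro h; rw [h] at hlen; simp at hlen
  have hodd : m'' % 2 = 1 := by
    have h := pval_odd c'' hc'' hne
    rw [hm''eq] at h
    have h2 : ¬ (2 ∣ m'') := fun hd => h (by exact_mod_cast hd)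
    omega
  have h1 : revBit c'.length m' < 2 ^ c'.length := revBit_lt _ _
  have h2 : 2 ^ (c''.length - 1) ≤ revBit c''.length m'' :=
    revBit_ge_of_odd _ _ (by omega) hodd
  have h3 : 2 ^ c'.length ≤ 2 ^ (c''.length - 1) :=
    Nat.pow_le_pow_right (by norm_num) (by omega)
  omega
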